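/- arXiv:2201.13114 — 2 statements merged into one kernel-verified Lean document; each statement's English description precedes it below -/
import Mathlib

section
/- There exist a positive integer N and real samples z₁, …, z_N such that the Cauchy location likelihood equation Σ_{k=1}^N 2(z_k − γ)/(1 + (z_k − γ)²) = 0 (with σ = 1) has more than one real solution γ. -/
/-! The score term `ψ u = 2u / (1 + u²)` satisfies `ψ u + ψ v = 0` whenever `u v = -1`.
Hence for two samples `a, b` every `γ` with `(a - γ)(b - γ) = -1` solves the likelihood
equation; this quadratic in `γ` has two real roots once `|a - b| > 2`, e.g. `a = 0`,
`b = 5/2` gives `γ = 2` and `γ = 1/2`. -/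

lemma two_mul_div_one_add_sq_add_eq_zero_of_mul_eq_neg_one {u v : ℝ} (h : u * v = -1) :
    2 * u / (1 + u ^ 2) + 2 * v / (1 + v ^ 2) = 0 := by
  have hu : 1 + u ^ 2 ≠ 0 := by positivity
  have hv : 1 + v ^ 2 ≠ 0 := by positivity
  rw [div_add_div _ _ hu hv, div_eq_zero_iff]
  left
  linear_combination 2 * (u + v) * h

lemma cauchy_score_sum_fin_two_eq_zero {a b γ : ℝ} (h : (a - γ) * (b - γ) = -1) :
    ∑ k, 2 * (![a, b] k - γ) / (1 + (![a, b] k - γ) ^ 2) = 0 := by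
  simpa [Fin.sum_univ_two] using two_mul_div_one_add_sq_add_eq_zero_of_mul_eq_neg_one h

theorem cauchy_likelihood_equation_multiple_roots :
    ∃ (N : ℕ), 0 < N ∧ ∃ (z : Fin N → ℝ) (γ₁ γ₂ : ℝ), γ₁ ≠ γ₂ ∧
      (∑ k, 2 * (z k - γ₁) / (1 + (z k - γ₁) ^ 2) = 0) ∧
      (∑ k, 2 * (z k - γ₂) / (1 + (z k - γ₂) ^ 2) = 0) :=
  ⟨2, two_pos, ![0, 5 / 2], 2, 1 / 2, by norm_num,
    cauchy_score_sum_fin_two_eq_zero (by norm_num), cauchy_score_sum_fin_two_eq_zero (by norm_num)⟩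
end

section
/- If V ∼ Uniform(−π/2, π/2) and W ∼ Exp(1) are independent, then X := 2·√W·sin(V) is distributed as a centered Gaussian with variance 2 (characteristic function exp(−t²)). -/
open MeasureTheory Real ProbabilityTheory

noncomputable section
open Set Complex

variable (t : ℝ)

-- the cartesian 2D integrand
def Gfun (t : ℝ) : ℝ × ℝ → ℂ := fun q =>
  Set.indicator (Ioi (0:ℝ)) (fun x => Complex.exp (-(x:ℂ)^2)) q.1 *
    Complex.exp (-(q.2:ℂ)^2 + Complex.I * t * (2 * q.2))

-- value of the 2D Gaussian integral
lemma Gfun_integral : ∫ q : ℝ × ℝ, Gfun t q = (π / 2 : ℝ) * Complex.exp (-(t^2:ℝ)) := by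
  unfold Gfun
  rw [Measure.volume_eq_prod,
    integral_prod_mul (f := Set.indicator (Ioi (0:ℝ)) (fun x => Complex.exp (-(x:ℂ)^2)))
      (g := fun y : ℝ => Complex.exp (-(y:ℂ)^2 + Complex.I * t * (2 * y)))]
  have h1 : ∫ x : ℝ, Set.indicator (Ioi (0:ℝ)) (fun x => Complex.exp (-(x:ℂ)^2)) x
      = ((Real.sqrt π / 2 : ℝ) : ℂ) := by
    rw [integral_indicator measurableSet_Ioi]
    have h1' : ((∫ x in Ioi (0:ℝ), rexp (-1*x^2) : ℝ):ℂ)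
        = ∫ x in Ioi (0:ℝ), Complex.exp (-(x:ℂ)^2) :=
      integral_ofReal.symm.trans <| setIntegral_congr_fun measurableSet_Ioi fun x _ => by
        norm_cast; simp [Complex.ofReal_exp]
    rw [← h1', integral_gaussian_Ioi]
    norm_num
  have h2 : ∫ y : ℝ, Complex.exp (-(y:ℂ)^2 + Complex.I * t * (2 * y))
      = ((Real.sqrt π : ℝ) : ℂ) * Complex.exp (-(t^2:ℝ)) := by
    have key := GaussianFourier.integral_cexp_neg_mul_sq_add_real_mul_I (b := 1) (by norm_num) (-t)
    have : ∀ y : ℝ, Complex.exp (-(y:ℂ)^2 + Complex.I * t * (2 * y))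
        = Complex.exp (-1 * ((y:ℂ) + ((-t : ℝ) : ℂ) * Complex.I)^2) * Complex.exp (-(t^2:ℝ)) := by
      intro y
      rw [← Complex.exp_add]
      congr 1
      have hI : Complex.I^2 = -1 := Complex.I_sq
      push_cast
      linear_combination (t:ℂ)^2 * hI
    simp_rw [this, integral_mul_const]
    rw [key]
    congr 1
    rw [div_one, show (1/2:ℂ) = ((1/2:ℝ):ℂ) by norm_num, ← Complex.ofReal_cpow pi_pos.le]
    norm_num [Real.sqrt_eq_rpow]
  rw [h1, h2]
  have hpp : ((Real.sqrt π : ℝ):ℂ) * ((Real.sqrt π : ℝ):ℂ) = (π:ℂ) := by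
    rw [← Complex.ofReal_mul, Real.mul_self_sqrt pi_pos.le]
  push_cast
  push_cast at hpp
  linear_combination (Complex.exp (-(t:ℂ)^2) / 2) * hpp

lemma polar_step : ∫ q : ℝ × ℝ, Gfun t q
    = ∫ p in (Ioi (0:ℝ)) ×ˢ (Ioo (-(π/2)) (π/2)),
        (p.1 : ℂ) * Complex.exp (-(p.1:ℂ)^2 + Complex.I * t * (2 * p.1 * Real.sin p.2)) := by
  rw [← integral_comp_polarCoord_symm (Gfun t)]
  have hsub : (Ioi (0:ℝ)) ×ˢ (Ioo (-(π/2)) (π/2)) ⊆ polarCoord.target := by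
    rw [polarCoord_target]
    refine Set.prod_mono subset_rfl (Set.Ioo_subset_Ioo (by linarith [pi_pos]) (by linarith [pi_pos]))
  rw [setIntegral_eq_of_subset_of_forall_diff_eq_zero
    (by rw [polarCoord_target]; exact (measurableSet_Ioi.prod measurableSet_Ioo)) hsub ?_]
  · refine setIntegral_congr_fun ((measurableSet_Ioi.prod measurableSet_Ioo)) fun p hp => ?_
    obtain ⟨hr, hθ⟩ := hp
    simp only [polarCoord_symm_apply, Gfun]
    rw [Set.indicator_of_mem (Set.mem_Ioi.mpr (mul_pos hr (Real.cos_pos_of_mem_Ioo hθ)))]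
    rw [Complex.real_smul, ← Complex.exp_add]
    congr 2
    have hc : ((Real.cos p.2 : ℂ))^2 + ((Real.sin p.2 : ℂ))^2 = 1 := by
      exact_mod_cast congrArg (Complex.ofReal) (Real.cos_sq_add_sin_sq p.2)
    simp only [Complex.ofReal_mul]
    linear_combination (-(p.1:ℂ)^2) * hc
  · rintro p ⟨hp, hps⟩
    rw [polarCoord_target] at hp
    obtain ⟨hr, hθ⟩ := hp
    have hcos : Real.cos p.2 ≤ 0 := by
      have : p.2 ∉ Ioo (-(π/2)) (π/2) := fun h => hps ⟨hr, h⟩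
      rw [Set.mem_Ioo, not_and_or, not_lt, not_lt] at this
      rcases this with h | h
      · rw [← Real.cos_neg]
        exact Real.cos_nonpos_of_pi_div_two_le_of_le (by linarith) (by linarith [hθ.1, pi_pos])
      · exact Real.cos_nonpos_of_pi_div_two_le_of_le h (by linarith [hθ.2, pi_pos])
    have : p.1 * Real.cos p.2 ∉ Ioi (0:ℝ) := by
      simp only [Set.mem_Ioi, not_lt]
      exact mul_nonpos_of_nonneg_of_nonpos (le_of_lt hr) hcos
    simp only [polarCoord_symm_apply, Gfun, Set.indicator_of_notMem this, zero_mul, smul_zero]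

lemma norm_aux (r : ℝ) (z : ℂ) (hz : z.re = 0) :
    ‖(r:ℂ) * Complex.exp (-(r:ℂ)^2 + z)‖ = |r| * Real.exp (-r^2) := by
  simp only [norm_mul, Complex.norm_exp, Complex.norm_real, Real.norm_eq_abs]
  congr 1
  simp [Complex.add_re, hz, ← Complex.ofReal_pow]

lemma cont_aux : Continuous fun p : ℝ × ℝ =>
    (p.1 : ℂ) * Complex.exp (-(p.1:ℂ)^2 + Complex.I * t * (2 * p.1 * Real.sin p.2)) := by
  fun_prop

lemma integrable_aux : Integrable
    (fun p : ℝ × ℝ => (p.1 : ℂ) * Complex.exp (-(p.1:ℂ)^2 + Complex.I * t * (2 * p.1 * Real.sin p.2)))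
    ((volume.restrict (Ioi (0:ℝ))).prod (volume.restrict (Ioo (-(π/2)) (π/2)))) := by
  have h1 : Integrable (fun r : ℝ => |r| * Real.exp (-1 * r^2)) (volume.restrict (Ioi (0:ℝ))) :=
    ((integrable_mul_exp_neg_mul_sq one_pos).abs.congr (Filter.Eventually.of_forall fun x => by
      simp [abs_mul, abs_of_pos (Real.exp_pos _)])).restrict
  have h2 : Integrable (fun _ : ℝ => (1:ℝ)) (volume.restrict (Ioo (-(π/2)) (π/2))) := by
    refine (integrableOn_const_iff).mpr (Or.inr ?_)
    rw [Real.volume_Ioo]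
    exact ENNReal.ofReal_lt_top
  have hbound := h1.mul_prod h2
  refine hbound.mono' (cont_aux t).aestronglyMeasurable (Filter.Eventually.of_forall fun p => ?_)
  rw [norm_aux _ _ (by simp [Complex.mul_re])]
  norm_num

lemma iterated_eq : (∫ r in Ioi (0:ℝ), ∫ v in Ioo (-(π/2)) (π/2),
      (r:ℂ) * Complex.exp (-(r:ℂ)^2 + Complex.I * t * (2 * r * Real.sin v)))
    = ∫ p in (Ioi (0:ℝ)) ×ˢ (Ioo (-(π/2)) (π/2)),
        (p.1 : ℂ) * Complex.exp (-(p.1:ℂ)^2 + Complex.I * t * (2 * p.1 * Real.sin p.2)) := by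
  rw [Measure.volume_eq_prod, ← Measure.prod_restrict]
  exact integral_integral (integrable_aux t)

-- value of the product-set integral
lemma prodset_value : (∫ p in (Ioi (0:ℝ)) ×ˢ (Ioo (-(π/2)) (π/2)),
      (p.1 : ℂ) * Complex.exp (-(p.1:ℂ)^2 + Complex.I * t * (2 * p.1 * Real.sin p.2)))
    = (π / 2 : ℝ) * Complex.exp (-(t^2:ℝ)) := by
  rw [← polar_step, Gfun_integral]

end

theorem cms_formula_alpha_two
    {Ω : Type*} [MeasurableSpace Ω] (μ : Measure Ω) [IsProbabilityMeasure μ]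
    (V W : Ω → ℝ) (hV : Measurable V) (hW : Measurable W)
    (hVlaw : Measure.map V μ =
      (ENNReal.ofReal π)⁻¹ • volume.restrict (Set.Ioo (-(π / 2)) (π / 2)))
    (hWlaw : Measure.map W μ =
      volume.withDensity (fun x => ENNReal.ofReal (if 0 ≤ x then Real.exp (-x) else 0)))
    (hindep : IndepFun V W μ) :
    ∀ t : ℝ, ∫ ω, Complex.exp (Complex.I * t * (2 * Real.sqrt (W ω) * Real.sin (V ω))) ∂μ =
      Complex.exp (-(t ^ 2 : ℝ)) := by
  intro t
  have hWm : AEMeasurable W μ := hW.aemeasurable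
  have hVm : AEMeasurable V μ := hV.aemeasurable
  have hprobV : IsProbabilityMeasure (μ.map V) := Measure.isProbabilityMeasure_map hVm
  have hprobW : IsProbabilityMeasure (μ.map W) := Measure.isProbabilityMeasure_map hWm
  set φ : ℝ × ℝ → ℂ := fun p =>
    Complex.exp (Complex.I * t * (2 * Real.sqrt p.1 * Real.sin p.2)) with hφ
  have hφc : Continuous φ := by fun_prop
  have hpair : μ.map (fun ω => (W ω, V ω)) = (μ.map W).prod (μ.map V) :=
    (indepFun_iff_map_prod_eq_prod_map_map hWm hVm).mp hindep.symm
  have hφnorm : ∀ p : ℝ × ℝ, ‖φ p‖ = 1 := by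
    intro p
    rw [hφ]
    simp only [Complex.norm_exp]
    have : (Complex.I * t * (2 * Real.sqrt p.1 * Real.sin p.2)).re = 0 := by
      simp [Complex.mul_re, Complex.mul_im]
    rw [this, Real.exp_zero]
  have hInt : Integrable φ ((μ.map W).prod (μ.map V)) :=
    (integrable_const (1:ℝ)).mono' hφc.aestronglyMeasurable
      (Filter.Eventually.of_forall fun p => le_of_eq (hφnorm p))
  have step1 : ∫ ω, Complex.exp (Complex.I * t * (2 * Real.sqrt (W ω) * Real.sin (V ω))) ∂μ
      = ∫ x, ∫ y, φ (x, y) ∂(μ.map V) ∂(μ.map W) := by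
    rw [← integral_prod φ hInt, ← hpair,
      integral_map (hWm.prodMk hVm) hφc.aestronglyMeasurable]
  rw [step1, hVlaw, hWlaw]
  simp only [integral_smul_measure]
  have htoReal : ((ENNReal.ofReal π)⁻¹).toReal = π⁻¹ := by
    rw [ENNReal.toReal_inv, ENNReal.toReal_ofReal pi_pos.le]
  simp only [htoReal]
  have hdens_meas : Measurable fun x : ℝ => (if 0 ≤ x then Real.exp (-x) else 0).toNNReal := by
    refine Measurable.real_toNNReal ?_
    exact Measurable.ite measurableSet_Ici (by fun_prop) measurable_const
  have hwd : (fun x : ℝ => ENNReal.ofReal (if 0 ≤ x then Real.exp (-x) else 0))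
      = fun x : ℝ => (((if 0 ≤ x then Real.exp (-x) else 0).toNNReal : NNReal) : ENNReal) := rfl
  rw [hwd, integral_withDensity_eq_integral_smul hdens_meas]
  have hind : ∀ x : ℝ, (if 0 ≤ x then rexp (-x) else 0).toNNReal •
        (π⁻¹ • ∫ y in Set.Ioo (-(π / 2)) (π / 2), φ (x, y))
      = Set.indicator (Set.Ici (0:ℝ))
          (fun x => π⁻¹ • (rexp (-x) • ∫ y in Set.Ioo (-(π / 2)) (π / 2), φ (x, y))) x := by
    intro x
    by_cases hx : 0 ≤ x
    · rw [Set.indicator_of_mem (Set.mem_Ici.mpr hx), if_pos hx, NNReal.smul_def,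
        Real.coe_toNNReal _ (Real.exp_pos _).le, smul_comm]
    · rw [Set.indicator_of_notMem (by simpa using hx), if_neg hx]
      simp
  simp only [hind]
  rw [integral_indicator measurableSet_Ici, integral_Ici_eq_integral_Ioi, integral_smul]
  have hkey : ∀ r ∈ Set.Ioi (0:ℝ),
      (2 * r ^ ((2:ℝ)-1)) • ((fun w => rexp (-w) • ∫ y in Set.Ioo (-(π / 2)) (π / 2), φ (w, y)) (r ^ (2:ℝ)))
      = (2:ℝ) • ∫ v in Set.Ioo (-(π/2)) (π/2),
          (r:ℂ) * Complex.exp (-(r:ℂ)^2 + Complex.I * t * (2 * r * Real.sin v)) := by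
    intro r hr
    have hr' : (0:ℝ) < r := hr
    have h21 : r ^ ((2:ℝ)-1) = r := by
      norm_num
    have h2 : r ^ (2:ℝ) = r ^ 2 := by
      rw [show (2:ℝ) = ((2:ℕ):ℝ) by norm_num, Real.rpow_natCast]
    have hsq : Real.sqrt (r ^ 2) = r := by
      rw [Real.sqrt_sq hr'.le]
    have hint : ∀ v : ℝ, (r:ℂ) * Complex.exp (-(r:ℂ)^2 + Complex.I * t * (2 * r * Real.sin v))
        = (r * rexp (-(r^2))) • Complex.exp (Complex.I * t * (2 * r * Real.sin v)) := by
      intro v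
      rw [Complex.real_smul, Complex.exp_add]
      push_cast [Complex.ofReal_exp]
      ring
    simp only [hint, integral_smul, h21, h2, hφ, hsq, smul_smul]
    congr 1
    ring
  rw [← integral_comp_rpow_Ioi_of_pos
      (g := fun w => rexp (-w) • ∫ y in Set.Ioo (-(π / 2)) (π / 2), φ (w, y)) two_pos,
    setIntegral_congr_fun measurableSet_Ioi hkey, integral_smul, iterated_eq, prodset_value]
  rw [Complex.real_smul, Complex.real_smul]
  push_cast
  have hπ : (π:ℂ) ≠ 0 := by
    exact_mod_cast Real.pi_ne_zero
  field_simp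
end
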